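/- arXiv:1909.05821 — 2 statements merged into one kernel-verified Lean document; each statement's English description precedes it below -/
import Mathlib

section
/- If 3M < N and n ≤ M, then the break-even reward ratio 1/P_{n,N,M}(n) − 1 ≥ 3^n − 1, i.e., the required reward-to-stake ratio for an economically viable attack grows at least exponentially in the sample size n. -/
lemma df_le (N M n : ℕ) (h1 : n ≤ M) (h3 : 3 * M < N) :
    3 ^ n * M.descFactorial n ≤ N.descFactorial n := by
  induction n with
  | zero => simp
  | succ k ih =>
    have hk : k ≤ M := Nat.le_of_succ_le h1
    have ih' := ih hk
    rw [Nat.descFactorial_succ, Nat.descFactorial_succ, pow_succ]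
    have h2 : 3 * (M - k) ≤ N - k := by omega
    calc 3 ^ k * 3 * ((M - k) * M.descFactorial k)
        = (3 * (M - k)) * (3 ^ k * M.descFactorial k) := by ring
      _ ≤ (N - k) * N.descFactorial k := Nat.mul_le_mul h2 ih'

lemma choose_le (N M n : ℕ) (h1 : n ≤ M) (h3 : 3 * M < N) :
    3 ^ n * M.choose n ≤ N.choose n := by
  have h := df_le N M n h1 h3
  rw [Nat.descFactorial_eq_factorial_mul_choose, Nat.descFactorial_eq_factorial_mul_choose] at h
  have hf : 0 < n.factorial := Nat.factorial_pos n
  calc 3 ^ n * M.choose n ≤ 3 ^ n * M.choose n := le_refl _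
    _ ≤ N.choose n := by
        have := h
        nlinarith [Nat.factorial_pos n]

/-- If 3M < N and n ≤ M, break-even ratio 1/P − 1 ≥ 3^n − 1. -/
theorem break_even_exponential (N M n : ℕ) (h1 : n ≤ M) (h3 : 3 * M < N) :
    1 / ((M.choose n : ℚ) / (N.choose n : ℚ)) - 1 ≥ (3 : ℚ) ^ n - 1 := by
  have hM : 0 < (M.choose n : ℚ) := by
    exact_mod_cast Nat.choose_pos h1
  have hN : 0 < (N.choose n : ℚ) := by
    exact_mod_cast Nat.choose_pos (le_trans h1 (by omega))
  have key : (3 : ℚ) ^ n * M.choose n ≤ N.choose n := by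
    exact_mod_cast choose_le N M n h1 h3
  rw [one_div_div]
  have : (3 : ℚ) ^ n ≤ N.choose n / M.choose n := by
    rw [le_div_iff₀ hM]
    linarith
  linarith
end

section
/- If at least one honest node is guaranteed to be in the verifier group whenever the sample is not entirely Byzantine, then the probability of a successful attack (introducing an undetected error) is at most P_{n,N,M}(n) = (choose M n)/(choose N n). Consequently, if the reward satisfies r < ξ·(1/P_{n,N,M}(n) − 1), the expected revenue p·r − (1−p)·ξ of the attack is strictly negative for any success probability p ≤ P_{n,N,M}(n). -/
/-- If the attack succeeds only when all verifiers are Byzantine, and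
r < ξ·(1/P − 1), then the expected revenue is strictly negative. -/
theorem attack_revenue_negative (N M n : ℕ) (h1 : n ≤ M) (h2 : M < N)
    (p r ξ : ℝ) (hp0 : 0 ≤ p)
    (hp : p ≤ ((M.choose n : ℝ) / (N.choose n : ℝ)))
    (hr : 0 ≤ r) (hξ : 0 < ξ)
    (hrξ : r < ξ * (1 / ((M.choose n : ℝ) / (N.choose n : ℝ)) - 1)) :
    p * r - (1 - p) * ξ < 0 := by
  set P : ℝ := (M.choose n : ℝ) / (N.choose n : ℝ) with hPdef
  have hM : (0 : ℝ) < (M.choose n : ℝ) := by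
    exact_mod_cast Nat.choose_pos h1
  have hN : (0 : ℝ) < (N.choose n : ℝ) := by
    exact_mod_cast Nat.choose_pos (le_of_lt (lt_of_le_of_lt h1 h2))
  have hP0 : 0 < P := div_pos hM hN
  have key : P * (ξ * (1 / P - 1)) = ξ * (1 - P) := by
    field_simp
  have h3 : p * r ≤ P * r := mul_le_mul_of_nonneg_right hp hr
  have h4 : P * r < P * (ξ * (1 / P - 1)) := by
    exact mul_lt_mul_of_pos_left hrξ hP0
  have h5 : ξ * (1 - P) ≤ (1 - p) * ξ := by nlinarith
  nlinarith
end
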